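/- Fix n ≥ 3 and let L be an orthomodular ortholattice. Then L satisfies Godowski's equation n-Go (for all a₁, …, aₙ ∈ L, (a₁ →₁ a₂) ⊓ … ⊓ (aₙ₋₁ →₁ aₙ) ⊓ (aₙ →₁ a₁) = (aₙ →₁ aₙ₋₁) ⊓ … ⊓ (a₂ →₁ a₁) ⊓ (a₁ →₁ aₙ)) if and only if L satisfies the 2n-variable inference: for all a₁, b₁, …, aₙ, bₙ ∈ L, if a₁ ≤ b₁ᶜ, b₁ ≤ a₂ᶜ, a₂ ≤ b₂ᶜ, …, aₙ ≤ bₙᶜ, and bₙ ≤ a₁ᶜ, then (a₁ ⊔ b₁) ⊓ (a₂ ⊔ b₂) ⊓ … ⊓ (aₙ ⊔ bₙ) ≤ b₁ ⊔ a₂. -/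

import Mathlib

/-- An ortholattice: a bounded lattice with an orthocomplementation. -/
class Ortholattice (α : Type*) extends Lattice α, BoundedOrder α, Compl α where
  compl_compl : ∀ x : α, xᶜᶜ = x
  compl_antitone : ∀ x y : α, x ≤ y → yᶜ ≤ xᶜ
  inf_compl : ∀ x : α, x ⊓ xᶜ = ⊥
  sup_compl : ∀ x : α, x ⊔ xᶜ = ⊤

/-- The Sasaki implication `a →₁ b = aᶜ ⊔ (a ⊓ b)`. -/
def olImp1 {α : Type*} [Ortholattice α] (a b : α) : α := aᶜ ⊔ (a ⊓ b)

/-- The Dishkant implication `a →₂ b = b ⊔ (aᶜ ⊓ bᶜ)`. -/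
def olImp2 {α : Type*} [Ortholattice α] (a b : α) : α := b ⊔ (aᶜ ⊓ bᶜ)


/-!
Since `bᶜ →₁ aᶜ = a →₂ b` (the Dishkant implication), n-Go applied to complements is a cyclic
identity for `→₂`. Under the premises of the inference each `aᵢ ⊔ bᵢ` lies below `aᵢ₊₁ →₂ aᵢ`, so
n-Go bounds `⨅ (aᵢ ⊔ bᵢ)` by `(a₁ ⊔ b₁) ⊓ (a₁ →₂ a₂)`, and in an orthomodular lattice this is
below `b₁ ⊔ a₂` as soon as `a₁ ⊥ b₁ ⊥ a₂`. Conversely, the inference for `aᵢ := xᵢᶜ` and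
`bᵢ := xᵢ ⊓ xᵢ₊₁` bounds the Godowski meet `⨅ (xᵢ →₁ xᵢ₊₁)` by `x₂ →₁ x₁`, hence, by cyclic
shifts, by every `xᵢ₊₁ →₁ xᵢ`; reversing the cycle gives the opposite inequality.
-/

open Finset

namespace Ortholattice

variable {α : Type*} [Ortholattice α]

theorem compl_le_compl {x y : α} (h : x ≤ y) : yᶜ ≤ xᶜ := compl_antitone x y h

theorem le_compl_comm {x y : α} : x ≤ yᶜ ↔ y ≤ xᶜ :=
  ⟨fun h => compl_compl y ▸ compl_le_compl h, fun h => compl_compl x ▸ compl_le_compl h⟩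

theorem compl_sup_eq (x y : α) : (x ⊔ y)ᶜ = xᶜ ⊓ yᶜ := by
  refine le_antisymm (le_inf (compl_le_compl le_sup_left) (compl_le_compl le_sup_right)) ?_
  exact le_compl_comm.mpr (sup_le (le_compl_comm.mpr inf_le_left) (le_compl_comm.mpr inf_le_right))

theorem compl_inf_eq (x y : α) : (x ⊓ y)ᶜ = xᶜ ⊔ yᶜ := by
  rw [← compl_compl (xᶜ ⊔ yᶜ), compl_sup_eq, compl_compl, compl_compl]

theorem olImp1_compl_compl (a b : α) : olImp1 bᶜ aᶜ = olImp2 a b := by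
  rw [olImp1, olImp2, compl_compl, inf_comm]

theorem sup_le_olImp2 {a b c : α} (hba : b ≤ aᶜ) (hbc : b ≤ cᶜ) : a ⊔ b ≤ olImp2 c a :=
  sup_le_sup_left (le_inf hbc hba) a

section Orthomodular

variable (hOM : ∀ a b : α, a ≤ b → a ⊔ (aᶜ ⊓ b) = b)
include hOM

theorem compl_inf_sup_eq_of_le_compl {p q : α} (h : p ≤ qᶜ) : qᶜ ⊓ (p ⊔ q) = p := by
  have hdisj : pᶜ ⊓ (qᶜ ⊓ (p ⊔ q)) = ⊥ := by
    rw [← inf_assoc, ← compl_sup_eq, inf_comm, inf_compl]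
  have := hOM p (qᶜ ⊓ (p ⊔ q)) (le_inf h le_sup_left)
  rwa [hdisj, sup_bot_eq, eq_comm] at this

theorem inf_olImp2_le (x y : α) : x ⊓ olImp2 x y ≤ y := by
  set e := yᶜ ⊓ (x ⊔ y)
  have he : eᶜ = olImp2 x y := by rw [compl_inf_eq, compl_compl, compl_sup_eq, olImp2]
  have hyc : e ⊔ (x ⊔ y)ᶜ = yᶜ := by
    have hproj : eᶜ ⊓ yᶜ = (x ⊔ y)ᶜ := by
      rw [he, olImp2, ← compl_sup_eq, inf_comm, sup_comm]
      exact compl_inf_sup_eq_of_le_compl hOM (compl_le_compl le_sup_right)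
    rw [← hproj]
    exact hOM e yᶜ inf_le_left
  have hle : yᶜ ≤ xᶜ ⊔ e :=
    hyc ▸ sup_le le_sup_right (le_sup_of_le_left (compl_le_compl le_sup_left))
  have := compl_le_compl hle
  rwa [compl_compl, compl_sup_eq, compl_compl, he] at this

theorem sup_inf_olImp2_le {a b c : α} (hab : a ≤ bᶜ) (hbc : b ≤ cᶜ) :
    (a ⊔ b) ⊓ olImp2 a c ≤ b ⊔ c := by
  set t := (a ⊔ b) ⊓ olImp2 a c
  have hbt : b ≤ t := le_inf le_sup_right (le_sup_of_le_right (le_inf (le_compl_comm.mp hab) hbc))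
  have hrest : bᶜ ⊓ t = a ⊓ olImp2 a c := by
    rw [← inf_assoc, compl_inf_sup_eq_of_le_compl hOM hab]
  calc t = b ⊔ (bᶜ ⊓ t) := (hOM b t hbt).symm
    _ ≤ b ⊔ c := sup_le_sup_left (hrest ▸ inf_olImp2_le hOM a c) b

end Orthomodular

end Ortholattice

theorem Finset.inf_univ_comp_equiv {ι α : Type*} [Fintype ι] [SemilatticeInf α] [OrderTop α]
    (σ : ι ≃ ι) (f : ι → α) : univ.inf (f ∘ σ) = univ.inf f := by
  calc univ.inf (f ∘ σ) = (univ.map σ.toEmbedding).inf f := (inf_map univ σ.toEmbedding f).symm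
    _ = univ.inf f := by rw [map_univ_equiv]

theorem Fin.inf_univ_add_right {α : Type*} [SemilatticeInf α] [OrderTop α] {n : ℕ} [NeZero n]
    (f : Fin n → α) (j : Fin n) : (univ.inf fun i => f (i + j)) = univ.inf f :=
  inf_univ_comp_equiv (Equiv.addRight j) f

theorem Fin.inf_univ_neg_succ {α : Type*} [SemilatticeInf α] [OrderTop α] {n : ℕ} [NeZero n]
    (f : Fin n → Fin n → α) :
    (univ.inf fun i => f (-i) (-(i + 1))) = univ.inf fun i => f (i + 1) i := by
  rw [← inf_univ_comp_equiv ((Equiv.addRight 1).trans (Equiv.neg _)) fun i => f (i + 1) i]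
  congr 1
  funext i
  simp only [Function.comp_apply, Equiv.trans_apply, Equiv.coe_addRight, Equiv.neg_apply]
  rw [show -(i + 1) + 1 = -i by abel]

def SatisfiesGodowski (α : Type*) [Ortholattice α] (n : ℕ) [NeZero n] : Prop :=
  ∀ a : Fin n → α,
    (univ.inf fun i => olImp1 (a i) (a (i + 1))) = univ.inf fun i => olImp1 (a (i + 1)) (a i)

def SatisfiesGodowskiInference (α : Type*) [Ortholattice α] (n : ℕ) [NeZero n] : Prop :=
  ∀ a b : Fin n → α, (∀ i, a i ≤ (b i)ᶜ) → (∀ i, b i ≤ (a (i + 1))ᶜ) →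
    (univ.inf fun i => a i ⊔ b i) ≤ b 0 ⊔ a 1

open Ortholattice

section Godowski

variable {α : Type*} [Ortholattice α] {n : ℕ} [NeZero n]

theorem SatisfiesGodowski.inf_olImp2 (hGo : SatisfiesGodowski α n) (a : Fin n → α) :
    (univ.inf fun i => olImp2 (a (i + 1)) (a i)) = univ.inf fun i => olImp2 (a i) (a (i + 1)) := by
  simpa only [olImp1_compl_compl] using hGo fun i => (a i)ᶜ

theorem SatisfiesGodowski.satisfiesGodowskiInference (hOM : ∀ a b : α, a ≤ b → a ⊔ (aᶜ ⊓ b) = b)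
    (hGo : SatisfiesGodowski α n) : SatisfiesGodowskiInference α n := by
  intro a b hab hba
  have hb0 : b 0 ≤ (a 1)ᶜ := zero_add (1 : Fin n) ▸ hba 0
  have hchain : (univ.inf fun i => a i ⊔ b i) ≤ olImp2 (a 0) (a 1) :=
    calc (univ.inf fun i => a i ⊔ b i)
        ≤ univ.inf fun i => olImp2 (a (i + 1)) (a i) :=
          inf_mono_fun fun i _ => sup_le_olImp2 (le_compl_comm.mp (hab i)) (hba i)
      _ = univ.inf fun i => olImp2 (a i) (a (i + 1)) := hGo.inf_olImp2 a
      _ ≤ olImp2 (a 0) (a (0 + 1)) := inf_le (mem_univ 0)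
      _ = olImp2 (a 0) (a 1) := by rw [zero_add]
  exact (le_inf (inf_le (mem_univ 0)) hchain).trans (sup_inf_olImp2_le hOM (hab 0) hb0)

theorem SatisfiesGodowskiInference.inf_olImp1_le_one (H : SatisfiesGodowskiInference α n)
    (x : Fin n → α) : (univ.inf fun i => olImp1 (x i) (x (i + 1))) ≤ olImp1 (x 1) (x 0) := by
  have := H (fun i => (x i)ᶜ) (fun i => x i ⊓ x (i + 1)) (fun i => compl_le_compl inf_le_left)
    (fun i => (compl_compl (x (i + 1))).symm ▸ inf_le_right)
  rwa [zero_add, sup_comm, inf_comm] at this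

theorem SatisfiesGodowskiInference.inf_olImp1_le (H : SatisfiesGodowskiInference α n)
    (x : Fin n → α) :
    (univ.inf fun i => olImp1 (x i) (x (i + 1))) ≤ univ.inf fun i => olImp1 (x (i + 1)) (x i) := by
  refine Finset.le_inf fun j _ => ?_
  have := H.inf_olImp1_le_one fun i => x (i + j)
  simp only [add_right_comm _ 1 j, zero_add, add_comm 1 j] at this
  rwa [Fin.inf_univ_add_right (fun i => olImp1 (x i) (x (i + 1))) j] at this

theorem SatisfiesGodowskiInference.satisfiesGodowski (H : SatisfiesGodowskiInference α n) :
    SatisfiesGodowski α n := by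
  intro x
  refine le_antisymm (H.inf_olImp1_le x) ?_
  have := H.inf_olImp1_le fun i => x (-i)
  rwa [Fin.inf_univ_neg_succ (fun p q => olImp1 (x p) (x q)),
    Fin.inf_univ_neg_succ (fun p q => olImp1 (x q) (x p))] at this

end Godowski

/-- For fixed n ≥ 3 (here n = m + 3), an orthomodular ortholattice satisfies
Godowski'\''s equation n-Go iff it satisfies the 2n-variable inference. -/
theorem stmt_11 (α : Type*) [Ortholattice α]
    (hOM : ∀ a b : α, a ≤ b → a ⊔ (aᶜ ⊓ b) = b) (m : ℕ) :
    (∀ a : Fin (m + 3) → α,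
        (Finset.univ.inf fun i => olImp1 (a i) (a (i + 1))) =
          (Finset.univ.inf fun i => olImp1 (a (i + 1)) (a i))) ↔
      (∀ a b : Fin (m + 3) → α,
        (∀ i, a i ≤ (b i)ᶜ) → (∀ i, b i ≤ (a (i + 1))ᶜ) →
          (Finset.univ.inf fun i => a i ⊔ b i) ≤ b 0 ⊔ a 1) :=
  ⟨SatisfiesGodowski.satisfiesGodowskiInference hOM, SatisfiesGodowskiInference.satisfiesGodowski⟩
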